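/- arXiv:2411.15529 — 6 statements merged into one kernel-verified Lean document; each statement's English description precedes it below -/
import Mathlib

section
/- For any real δ > 0 and integers s, t ≥ 1, the Minkowski sum Q(s, δ) + 2^s · Q(t, δ) of a regular QAM constellation with 4^s points and minimum distance δ and the 2^s-dilate of a regular QAM constellation with 4^t points and minimum distance δ is exactly the regular QAM constellation Q(s + t, δ); in particular this superimposed constellation has zero mean, cardinality 4^s · 4^t, and minimum distance δ. -/
open Pointwise

noncomputable section

/-- The regular QAM constellation with `4^t` points and minimum distance `δ`. -/
def QAM (t : ℕ) (δ : ℝ) : Set ℂ :=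
  { z | ∃ a : ℕ, a < 2 ^ t ∧ ∃ b : ℕ, b < 2 ^ t ∧
      z = (δ : ℂ) * (((a : ℂ) - ((2 : ℂ) ^ t - 1) / 2) +
        ((b : ℂ) - ((2 : ℂ) ^ t - 1) / 2) * Complex.I) }

/-- The superimposed constellation `Q(s,δ) + 2^s • Q(t,δ)` (Minkowski sum). -/
def superQAM (s t : ℕ) (δ : ℝ) : Set ℂ :=
  QAM s δ + ((2 : ℂ) ^ s) • QAM t δ

/-!
Writing a level index `c < 2^(s+t)` in base `2^s` as `c = a + 2^s * a'` with `a < 2^s`, `a' < 2^t`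
splits the centred level `c - (2^(s+t) - 1)/2` as `(a - (2^s - 1)/2) + 2^s * (a' - (2^t - 1)/2)`;
doing this in both coordinates identifies `Q(s, δ) + 2^s • Q(t, δ)` with `Q(s + t, δ)`.
The remaining properties are those of a single square grid: its levels are symmetric about `0`,
and two distinct points differ by `δ` times a nonzero Gaussian integer, of norm at least `1`.
-/

open Complex Finset

lemma Finset.sum_range_sub_half_eq_zero {K : Type*} [Field K] [CharZero K] (N : ℕ) :
    ∑ k ∈ range N, ((k : K) - ((N : K) - 1) / 2) = 0 := by
  have hsum : (∑ k ∈ range N, (k : K)) * 2 = N * ((N : K) - 1) := by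
    rcases N with _ | N
    · simp
    · have h := congrArg (Nat.cast : ℕ → K) (sum_range_id_mul_two (N + 1))
      push_cast at h ⊢
      linear_combination h
  rw [sum_sub_distrib, sum_const, card_range, nsmul_eq_mul]
  linear_combination hsum / 2

lemma Complex.one_le_norm_intCast_add_intCast_mul_I {m k : ℤ} (h : m ≠ 0 ∨ k ≠ 0) :
    1 ≤ ‖(m : ℂ) + k * I‖ := by
  rcases h with hm | hk
  · calc (1 : ℝ) ≤ |(m : ℝ)| := by exact_mod_cast Int.one_le_abs hm
      _ = |((m : ℂ) + k * I).re| := by simp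
      _ ≤ _ := abs_re_le_norm _
  · calc (1 : ℝ) ≤ |(k : ℝ)| := by exact_mod_cast Int.one_le_abs hk
      _ = |((m : ℂ) + k * I).im| := by simp
      _ ≤ _ := abs_im_le_norm _

namespace QAM

def level (n a : ℕ) : ℂ := a - ((2 : ℂ) ^ n - 1) / 2

def point (n : ℕ) (δ : ℝ) (p : ℕ × ℕ) : ℂ := δ * (level n p.1 + level n p.2 * I)

lemma mem_iff {n : ℕ} {δ : ℝ} {z : ℂ} :
    z ∈ QAM n δ ↔ ∃ a < 2 ^ n, ∃ b < 2 ^ n, z = point n δ (a, b) :=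
  Iff.rfl

lemma eq_image (n : ℕ) (δ : ℝ) : QAM n δ = (range (2 ^ n) ×ˢ range (2 ^ n)).image (point n δ) := by
  ext z
  simp only [mem_iff, coe_image, coe_product, coe_range, Set.mem_image, Set.mem_prod,
    Set.mem_Iio, Prod.exists]
  aesop

lemma sum_level (n : ℕ) : ∑ a ∈ range (2 ^ n), level n a = 0 := by
  unfold level
  exact_mod_cast sum_range_sub_half_eq_zero (K := ℂ) (2 ^ n)

lemma level_add_mul (s t a a' : ℕ) :
    level (s + t) (a + 2 ^ s * a') = level s a + 2 ^ s * level t a' := by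
  simp only [level]
  push_cast
  ring

lemma point_add_mul (s t : ℕ) (δ : ℝ) (a b a' b' : ℕ) :
    point (s + t) δ (a + 2 ^ s * a', b + 2 ^ s * b') =
      point s δ (a, b) + 2 ^ s * point t δ (a', b') := by
  simp only [point, level_add_mul]
  ring

lemma point_sub (n : ℕ) (δ : ℝ) (p q : ℕ × ℕ) :
    point n δ p - point n δ q =
      δ * ((((p.1 : ℤ) - q.1 : ℤ) : ℂ) + (((p.2 : ℤ) - q.2 : ℤ) : ℂ) * I) := by
  simp only [point, level]
  push_cast
  ring

lemma abs_le_norm_point_sub {n : ℕ} (δ : ℝ) {p q : ℕ × ℕ} (h : p ≠ q) :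
    |δ| ≤ ‖point n δ p - point n δ q‖ := by
  have hpq : ((p.1 : ℤ) - q.1 : ℤ) ≠ 0 ∨ ((p.2 : ℤ) - q.2 : ℤ) ≠ 0 := by
    rw [Ne, Prod.ext_iff] at h
    omega
  rw [point_sub, norm_mul, norm_real, Real.norm_eq_abs]
  exact le_mul_of_one_le_right (abs_nonneg δ) (one_le_norm_intCast_add_intCast_mul_I hpq)

lemma point_injective (n : ℕ) {δ : ℝ} (hδ : δ ≠ 0) : Function.Injective (point n δ) := by
  intro p q h
  by_contra hpq
  have := abs_le_norm_point_sub (n := n) δ hpq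
  rw [h, sub_self, norm_zero] at this
  exact hδ (abs_nonpos_iff.mp this)

lemma finsum_eq_zero (n : ℕ) {δ : ℝ} (hδ : δ ≠ 0) : ∑ᶠ z ∈ QAM n δ, z = 0 := by
  rw [eq_image, finsum_mem_coe_finset, sum_image fun p _ q _ h => point_injective n hδ h,
    sum_product]
  simp only [point, ← mul_sum, sum_add_distrib, ← sum_mul, sum_const, ← smul_sum, sum_level,
    smul_zero, zero_mul, add_zero, mul_zero]

lemma ncard_eq (n : ℕ) {δ : ℝ} (hδ : δ ≠ 0) : (QAM n δ).ncard = 4 ^ n := by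
  rw [eq_image, Set.ncard_coe_finset, card_image_of_injective _ (point_injective n hδ),
    card_product, card_range, ← mul_pow]
  norm_num

lemma abs_le_norm_sub {n : ℕ} {δ : ℝ} {x y : ℂ} (hx : x ∈ QAM n δ) (hy : y ∈ QAM n δ)
    (hxy : x ≠ y) : |δ| ≤ ‖x - y‖ := by
  obtain ⟨a, -, b, -, rfl⟩ := mem_iff.mp hx
  obtain ⟨a', -, b', -, rfl⟩ := mem_iff.mp hy
  exact abs_le_norm_point_sub δ fun h => hxy (congrArg _ h)

lemma exists_norm_sub_eq_abs {n : ℕ} (hn : 1 ≤ n) {δ : ℝ} (hδ : δ ≠ 0) :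
    ∃ x ∈ QAM n δ, ∃ y ∈ QAM n δ, x ≠ y ∧ ‖x - y‖ = |δ| := by
  have h2n : 1 < 2 ^ n := Nat.one_lt_two_pow (by omega)
  refine ⟨point n δ (1, 0), mem_iff.mpr ⟨1, h2n, 0, by omega, rfl⟩,
    point n δ (0, 0), mem_iff.mpr ⟨0, by omega, 0, by omega, rfl⟩, fun h => ?_, ?_⟩
  · exact absurd (point_injective n hδ h) (by simp)
  · rw [point_sub]
    simp

end QAM

theorem superQAM_eq (s t : ℕ) (δ : ℝ) : superQAM s t δ = QAM (s + t) δ := by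
  ext z
  simp only [superQAM, Set.mem_add, Set.mem_smul_set, QAM.mem_iff]
  constructor
  · rintro ⟨_, ⟨a, ha, b, hb, rfl⟩, _, ⟨_, ⟨a', ha', b', hb', rfl⟩, rfl⟩, rfl⟩
    refine ⟨a + 2 ^ s * a', ?_, b + 2 ^ s * b', ?_, (QAM.point_add_mul s t δ a b a' b').symm⟩ <;>
      rw [pow_add] <;> exact Nat.add_mul_lt_mul_of_lt_of_lt ‹_› ‹_›
  · rintro ⟨c, hc, d, hd, rfl⟩
    have hs : 0 < 2 ^ s := Nat.two_pow_pos s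
    have hdiv {e : ℕ} (he : e < 2 ^ (s + t)) : e / 2 ^ s < 2 ^ t :=
      Nat.div_lt_of_lt_mul (by rwa [← pow_add])
    rw [← Nat.mod_add_div c (2 ^ s), ← Nat.mod_add_div d (2 ^ s), QAM.point_add_mul]
    exact ⟨_, ⟨_, Nat.mod_lt _ hs, _, Nat.mod_lt _ hs, rfl⟩,
      _, ⟨_, ⟨_, hdiv hc, _, hdiv hd, rfl⟩, rfl⟩, rfl⟩

theorem qam_superposition_general (δ : ℝ) (hδ : 0 < δ) (s t : ℕ) (ht : 1 ≤ t) :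
    superQAM s t δ = QAM (s + t) δ ∧
    (∑ᶠ x ∈ superQAM s t δ, x) = 0 ∧
    (superQAM s t δ).ncard = 4 ^ s * 4 ^ t ∧
    (∀ x ∈ superQAM s t δ, ∀ y ∈ superQAM s t δ, x ≠ y → δ ≤ ‖x - y‖) ∧
    (∃ x ∈ superQAM s t δ, ∃ y ∈ superQAM s t δ, x ≠ y ∧ ‖x - y‖ = δ) := by
  have hδ0 : δ ≠ 0 := hδ.ne'
  have habs : |δ| = δ := abs_of_pos hδ
  rw [superQAM_eq, ← pow_add]
  exact ⟨rfl, QAM.finsum_eq_zero _ hδ0, QAM.ncard_eq _ hδ0,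
    fun x hx y hy => habs ▸ QAM.abs_le_norm_sub hx hy,
    by simpa only [habs] using QAM.exists_norm_sub_eq_abs (n := s + t) (by omega) hδ0⟩

theorem qam_superposition (δ : ℝ) (hδ : 0 < δ) (s t : ℕ) (hs : 1 ≤ s) (ht : 1 ≤ t) :
    superQAM s t δ = QAM (s + t) δ ∧
    (∑ᶠ x ∈ superQAM s t δ, x) = 0 ∧
    (superQAM s t δ).ncard = 4 ^ s * 4 ^ t ∧
    (∀ x ∈ superQAM s t δ, ∀ y ∈ superQAM s t δ, x ≠ y → δ ≤ ‖x - y‖) ∧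
    (∃ x ∈ superQAM s t δ, ∃ y ∈ superQAM s t δ, x ≠ y ∧ ‖x - y‖ = δ) :=
  qam_superposition_general δ hδ s t ht
end
end

section
/- Let n₁ ≥ n₂ be natural numbers and m₁, m₂₁ natural numbers with m₁ + m₂₁ ≤ n₁ and m₂₁ ≤ n₂. Let F₁ be an invertible m₁ × m₁ matrix and F₂₁ an invertible m₂₁ × m₂₁ matrix over 𝔽₂, and define the n₁ × m₁ matrix G₁ = [0^{(n₁ − m₁ − m₂₁) × m₁}; F₁; 0^{m₂₁ × m₁}] and the n₁ × m₂₁ matrix G₂₁ = [0^{(n₂ − m₂₁) × m₂₁}; F₂₁; 0^{(n₁ − n₂) × m₂₁}]. Then the rank over 𝔽₂ of the horizontal concatenation [G₁ | S^{n₁ − n₂} G₂₁], where S is the n₁ × n₁ down-shift matrix, equals m₁ + m₂₁. -/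
noncomputable section

/-- The `q × q` down-shift matrix over `𝔽₂`: `S i j = 1` iff `i = j + 1`. -/
def shiftMatrix (q : ℕ) : Matrix (Fin q) (Fin q) (ZMod 2) :=
  Matrix.of fun i j => if (i : ℕ) = (j : ℕ) + 1 then 1 else 0

/-- The `q × mm` vertical block matrix whose rows `off, …, off + mm - 1` form `F`
and whose other rows are zero. -/
def blockAt (q mm off : ℕ) (F : Matrix (Fin mm) (Fin mm) (ZMod 2)) :
    Matrix (Fin q) (Fin mm) (ZMod 2) :=
  Matrix.of fun i j =>
    if h : off ≤ (i : ℕ) ∧ (i : ℕ) < off + mm then F ⟨(i : ℕ) - off, by omega⟩ j else 0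

/-! The argument: the shift only moves the block `F₂₁` down to the bottom rows, so the two
column blocks of the concatenation sit in disjoint row ranges. A vector killed by the
concatenation is then killed by `F₁` and `F₂₁` separately, hence is zero; the columns are
independent and the rank is the number of columns. -/

open Matrix

section BlockAt

variable {q mm off : ℕ} (F : Matrix (Fin mm) (Fin mm) (ZMod 2))

lemma shiftMatrix_mul_blockAt :
    shiftMatrix q * blockAt q mm off F = blockAt q mm (off + 1) F := by
  ext i j
  simp only [mul_apply, shiftMatrix, blockAt, of_apply]
  rcases Nat.eq_zero_or_pos (i : ℕ) with h0 | h0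
  · rw [dif_neg (by omega)]
    exact Finset.sum_eq_zero fun k _ => by rw [if_neg (by omega), zero_mul]
  · rw [Finset.sum_eq_single_of_mem (⟨(i : ℕ) - 1, by omega⟩ : Fin q) (Finset.mem_univ _)]
    · rw [if_pos (by simp only; omega), one_mul]
      by_cases h : off + 1 ≤ (i : ℕ) ∧ (i : ℕ) < off + 1 + mm
      · rw [dif_pos (by simp only; omega), dif_pos h]
        congr 1
        ext
        simp only
        omega
      · rw [dif_neg (by simp only; omega), dif_neg h]
    · intro k _ hk
      rw [if_neg fun he => hk (Fin.ext (by simp only; omega)), zero_mul]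

lemma shiftMatrix_pow_mul_blockAt (r : ℕ) :
    shiftMatrix q ^ r * blockAt q mm off F = blockAt q mm (off + r) F := by
  induction r with
  | zero => simp
  | succ r ih => rw [pow_succ', Matrix.mul_assoc, ih, shiftMatrix_mul_blockAt, Nat.add_assoc]

variable (w : Fin mm → ZMod 2)

lemma blockAt_mulVec_apply (i : Fin q) :
    (blockAt q mm off F *ᵥ w) i =
      if h : off ≤ (i : ℕ) ∧ (i : ℕ) < off + mm then (F *ᵥ w) ⟨(i : ℕ) - off, by omega⟩
      else 0 := by
  simp only [mulVec, dotProduct, blockAt, of_apply]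
  split_ifs
  · rfl
  · exact Finset.sum_eq_zero fun j _ => zero_mul _

lemma blockAt_mulVec_apply_add (h : off + mm ≤ q) (k : Fin mm) :
    (blockAt q mm off F *ᵥ w) ⟨off + k, by omega⟩ = (F *ᵥ w) k := by
  rw [blockAt_mulVec_apply, dif_pos (by simp only; omega)]
  congr 1
  ext
  simp

lemma blockAt_mulVec_apply_of_notMem {i : Fin q} (h : (i : ℕ) < off ∨ off + mm ≤ i) :
    (blockAt q mm off F *ᵥ w) i = 0 := by
  rw [blockAt_mulVec_apply, dif_neg (by omega)]

end BlockAt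

section Disjoint

variable {q a b o₁ o₂ : ℕ} {F : Matrix (Fin a) (Fin a) (ZMod 2)}
  {G : Matrix (Fin b) (Fin b) (ZMod 2)}

lemma injective_mulVec_fromCols_blockAt (h₁ : o₁ + a ≤ o₂) (h₂ : o₂ + b ≤ q)
    (hF : IsUnit F) (hG : IsUnit G) :
    Function.Injective (fromCols (blockAt q a o₁ F) (blockAt q b o₂ G)).mulVecLin := by
  rw [injective_iff_map_eq_zero]
  intro v hv
  rw [mulVecLin_apply, ← Sum.elim_comp_inl_inr v, fromCols_mulVec_sumElim] at hv
  have hFv : F *ᵥ (v ∘ Sum.inl) = 0 := funext fun k => by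
    have := congrFun hv ⟨o₁ + k, by omega⟩
    rwa [Pi.add_apply, blockAt_mulVec_apply_add _ _ (by omega),
      blockAt_mulVec_apply_of_notMem _ _ (Or.inl (by simp only; omega)), add_zero] at this
  have hGv : G *ᵥ (v ∘ Sum.inr) = 0 := funext fun k => by
    have := congrFun hv ⟨o₂ + k, by omega⟩
    rwa [Pi.add_apply, blockAt_mulVec_apply_add _ _ h₂,
      blockAt_mulVec_apply_of_notMem _ _ (Or.inr (by simp only; omega)), zero_add] at this
  have hl : v ∘ Sum.inl = 0 :=
    mulVec_injective_iff_isUnit.mpr hF (hFv.trans (mulVec_zero F).symm)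
  have hr : v ∘ Sum.inr = 0 :=
    mulVec_injective_iff_isUnit.mpr hG (hGv.trans (mulVec_zero G).symm)
  rw [← Sum.elim_comp_inl_inr v, hl, hr, Sum.elim_zero_zero]

lemma rank_fromCols_blockAt (h₁ : o₁ + a ≤ o₂) (h₂ : o₂ + b ≤ q)
    (hF : IsUnit F) (hG : IsUnit G) :
    (fromCols (blockAt q a o₁ F) (blockAt q b o₂ G)).rank = a + b := by
  rw [rank, LinearMap.finrank_range_of_inj (injective_mulVec_fromCols_blockAt h₁ h₂ hF hG),
    Module.finrank_fintype_fun_eq_card, Fintype.card_sum, Fintype.card_fin, Fintype.card_fin]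

end Disjoint

theorem rank_concat_two_user (n₁ n₂ m₁ m₂₁ : ℕ) (hn : n₂ ≤ n₁)
    (hm₁ : m₁ + m₂₁ ≤ n₁) (hm₂ : m₂₁ ≤ n₂)
    (F₁ : Matrix (Fin m₁) (Fin m₁) (ZMod 2))
    (F₂₁ : Matrix (Fin m₂₁) (Fin m₂₁) (ZMod 2))
    (hF₁ : IsUnit F₁) (hF₂₁ : IsUnit F₂₁) :
    (Matrix.fromCols
        (blockAt n₁ m₁ (n₁ - m₁ - m₂₁) F₁)
        (shiftMatrix n₁ ^ (n₁ - n₂) * blockAt n₁ m₂₁ (n₂ - m₂₁) F₂₁)).rank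
      = m₁ + m₂₁ := by
  rw [shiftMatrix_pow_mul_blockAt, show n₂ - m₂₁ + (n₁ - n₂) = n₁ - m₂₁ by omega]
  exact rank_fromCols_blockAt (by omega) (by omega) hF₁ hF₂₁
end
end

section
/- Under the K-user deterministic design, the rank over 𝔽₂ of the horizontal concatenation [S^{q − n₁} G₁ | S^{q − n₂} G₂ | … | S^{q − n_r} G_r] of all r shifted generator matrices equals Σ_{j=1}^{r} m_j, where S is the q × q down-shift matrix. -/
noncomputable section

/-- The generator matrix `G_j` of the `K`-user deterministic design: the `q × m_j`
vertical block matrix `[0^{(n_j − Σ_{i≥j} m_i) × m_j}; F_j; 0^{(Σ_{i>j} m_i) × m_j};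
0^{(q − n_j) × m_j}]`. -/
def Gmat {r : ℕ} (n m : Fin r → ℕ) (q : ℕ)
    (F : ∀ j : Fin r, Matrix (Fin (m j)) (Fin (m j)) (ZMod 2)) (j : Fin r) :
    Matrix (Fin q) (Fin (m j)) (ZMod 2) :=
  blockAt q (m j) (n j - ∑ i ∈ Finset.Ici j, m i) (F j)

/-- The horizontal concatenation `[S^{q−n₁}G₁ | ⋯ | S^{q−n_r}G_r]` of all `r`
shifted generator matrices, with column index type `Σ j, Fin (m j)`. -/
def fullConcat {r : ℕ} (n m : Fin r → ℕ) (q : ℕ)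
    (F : ∀ j : Fin r, Matrix (Fin (m j)) (Fin (m j)) (ZMod 2)) :
    Matrix (Fin q) ((j : Fin r) × Fin (m j)) (ZMod 2) :=
  Matrix.of fun i c => (shiftMatrix q ^ (q - n c.1) * Gmat n m q F c.1) i c.2

lemma shiftPow (q s : ℕ) (i j : Fin q) :
    (shiftMatrix q ^ s) i j = if (i : ℕ) = (j : ℕ) + s then 1 else 0 := by
  induction s generalizing j with
  | zero => simp [Matrix.one_apply, Fin.ext_iff]
  | succ s ih =>
    rw [pow_succ, Matrix.mul_apply]
    rcases lt_or_ge ((j : ℕ) + 1) q with h | h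
    · rw [Finset.sum_eq_single_of_mem (⟨(j : ℕ) + 1, h⟩ : Fin q) (Finset.mem_univ _)]
      · rw [ih ⟨(j : ℕ) + 1, h⟩]
        simp only [shiftMatrix, Matrix.of_apply, Fin.val_mk, if_pos rfl, mul_one]
        rw [show (j : ℕ) + 1 + s = (j : ℕ) + (s + 1) from by omega]
        simp
      · intro k _ hk
        have : (k : ℕ) ≠ (j : ℕ) + 1 := fun hc => hk (Fin.ext hc)
        simp [shiftMatrix, this]
    · have h2 : ¬ ((i : ℕ) = (j : ℕ) + (s + 1)) := by omega
      rw [if_neg h2]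
      apply Finset.sum_eq_zero
      intro k _
      have : (k : ℕ) ≠ (j : ℕ) + 1 := by omega
      simp [shiftMatrix, this]

lemma shift_pow_mul {q s : ℕ} {X : Type*} [Fintype X] (A : Matrix (Fin q) X (ZMod 2))
    (i : Fin q) (c : X) :
    (shiftMatrix q ^ s * A) i c =
      if h : s ≤ (i : ℕ) then A ⟨(i : ℕ) - s, by omega⟩ c else 0 := by
  rw [Matrix.mul_apply]
  split_ifs with h
  · rw [Finset.sum_eq_single_of_mem (⟨(i : ℕ) - s, by omega⟩ : Fin q) (Finset.mem_univ _)]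
    · rw [shiftPow]
      simp only [Fin.val_mk]
      rw [if_pos (by omega), one_mul]
    · intro k _ hk
      have hne : (i : ℕ) ≠ (k : ℕ) + s := by
        intro hc
        exact hk (Fin.ext (show (k : ℕ) = (i : ℕ) - s by omega))
      rw [shiftPow, if_neg hne, zero_mul]
  · apply Finset.sum_eq_zero
    intro k _
    rw [shiftPow, if_neg (by omega), zero_mul]

theorem rank_concat_all (r : ℕ) (hr : 1 ≤ r) (n : Fin r → ℕ)
    (hanti : ∀ i j : Fin r, i ≤ j → n j ≤ n i) (q : ℕ) (hq : q = n ⟨0, hr⟩)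
    (m : Fin r → ℕ) (hm : ∀ j : Fin r, (∑ i ∈ Finset.Ici j, m i) ≤ n j)
    (F : ∀ j : Fin r, Matrix (Fin (m j)) (Fin (m j)) (ZMod 2))
    (hF : ∀ j, IsUnit (F j)) :
    (fullConcat n m q F).rank = ∑ j, m j := by
  classical
  set T : Fin r → ℕ := fun j => ∑ i ∈ Finset.Ici j, m i with hT
  have hTn : ∀ j, T j ≤ n j := hm
  have hnq : ∀ j, n j ≤ q := fun j => hq ▸ hanti ⟨0, hr⟩ j (by
    simp [Fin.le_def])
  have hTq : ∀ j, T j ≤ q := fun j => (hTn j).trans (hnq j)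
  have hmT : ∀ j, m j ≤ T j := fun j =>
    Finset.single_le_sum (fun i _ => Nat.zero_le _) (Finset.mem_Ici.mpr le_rfl)
  have hlt : ∀ j j' : Fin r, j < j' → T j' + m j ≤ T j := by
    intro j j' h
    have hnotmem : j ∉ Finset.Ici j' := by
      simp only [Finset.mem_Ici]
      exact fun hc => absurd hc (not_le.mpr h)
    have hsub : insert j (Finset.Ici j') ⊆ Finset.Ici j := by
      intro x hx
      rcases Finset.mem_insert.mp hx with hx | hx
      · simp [hx]
      · exact Finset.mem_Ici.mpr (le_trans h.le (Finset.mem_Ici.mp hx))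
    calc T j' + m j = ∑ i ∈ insert j (Finset.Ici j'), m i := by
          rw [Finset.sum_insert hnotmem]; ring
      _ ≤ T j := Finset.sum_le_sum_of_subset hsub
  -- entry formula
  have hentry : ∀ (i : Fin q) (j : Fin r) (k : Fin (m j)),
      fullConcat n m q F i ⟨j, k⟩ =
        if h : q - T j ≤ (i : ℕ) ∧ (i : ℕ) < q - T j + m j then
          F j ⟨(i : ℕ) - (q - T j), by omega⟩ k else 0 := by
    intro i j k
    have h1 := hTn j
    have h2 := hnq j
    show (shiftMatrix q ^ (q - n j) * Gmat n m q F j) i k = _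
    rw [shift_pow_mul]
    unfold Gmat blockAt
    have hTj : ∀ j : Fin r, (∑ i ∈ Finset.Ici j, m i) = T j := fun _ => rfl
    simp only [hTj]
    by_cases h : q - T j ≤ (i : ℕ) ∧ (i : ℕ) < q - T j + m j
    · rw [dif_pos h, dif_pos (by omega : q - n j ≤ (i : ℕ))]
      simp only [Matrix.of_apply, Fin.val_mk]
      rw [dif_pos (by constructor <;> omega)]
      congr 1
      exact Fin.ext (by simp only [Fin.val_mk]; omega)
    · rw [dif_neg h]
      by_cases hs : q - n j ≤ (i : ℕ)
      · rw [dif_pos hs]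
        simp only [Matrix.of_apply, Fin.val_mk]
        rw [dif_neg (by omega)]
      · rw [dif_neg hs]
  -- the row-selection map
  have hfbound : ∀ c : (j : Fin r) × Fin (m j), q - T c.1 + (c.2 : ℕ) < q := by
    intro c
    have := hTq c.1
    have := hmT c.1
    have := c.2.isLt
    omega
  set f : ((j : Fin r) × Fin (m j)) → Fin q :=
    fun c => ⟨q - T c.1 + (c.2 : ℕ), hfbound c⟩ with hf
  -- the submatrix is the block diagonal matrix
  have hsub : (fullConcat n m q F).submatrix f id = Matrix.blockDiagonal' F := by
    ext ⟨j, k⟩ ⟨j', k'⟩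
    rw [Matrix.submatrix_apply, id]
    rw [hentry (f ⟨j, k⟩) j' k']
    have hfv : ((f ⟨j, k⟩ : Fin q) : ℕ) = q - T j + (k : ℕ) := rfl
    rcases lt_trichotomy j j' with hjj | hjj | hjj
    · rw [Matrix.blockDiagonal'_apply_ne F _ _ hjj.ne]
      have := hlt j j' hjj
      have := hTq j
      have := hTq j'
      have := k.isLt
      rw [dif_neg (by rw [hfv]; omega)]
    · subst hjj
      rw [Matrix.blockDiagonal'_apply_eq]
      have := hTq j
      have := hmT j
      have := k.isLt
      rw [dif_pos (by rw [hfv]; constructor <;> omega)]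
      congr 1
      exact Fin.ext (by simp only [Fin.val_mk, hfv]; omega)
    · rw [Matrix.blockDiagonal'_apply_ne F _ _ hjj.ne']
      have := hlt j' j hjj
      have := hTq j
      have := hTq j'
      have := k.isLt
      rw [dif_neg (by rw [hfv]; omega)]
  -- the block diagonal matrix is invertible
  have hBD : IsUnit (Matrix.blockDiagonal' F) := by
    apply isUnit_iff_exists.mpr
    refine ⟨Matrix.blockDiagonal' (fun j => (F j)⁻¹), ?_, ?_⟩
    · rw [← Matrix.blockDiagonal'_mul]
      have : (fun k => F k * (F k)⁻¹) = fun _ => (1 : Matrix _ _ (ZMod 2)) := by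
        funext k
        exact Matrix.mul_nonsing_inv _ ((Matrix.isUnit_iff_isUnit_det _).mp (hF k))
      rw [this]
      exact Matrix.blockDiagonal'_one
    · rw [← Matrix.blockDiagonal'_mul]
      have : (fun k => (F k)⁻¹ * F k) = fun _ => (1 : Matrix _ _ (ZMod 2)) := by
        funext k
        exact Matrix.nonsing_inv_mul _ ((Matrix.isUnit_iff_isUnit_det _).mp (hF k))
      rw [this]
      exact Matrix.blockDiagonal'_one
  have hcard : Fintype.card ((j : Fin r) × Fin (m j)) = ∑ j, m j := by
    simp [Fintype.card_sigma]
  -- lower bound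
  have hlow : (∑ j, m j) ≤ (fullConcat n m q F).rank := by
    have h1 : (Matrix.blockDiagonal' F).rank = ∑ j, m j := by
      rw [Matrix.rank_of_isUnit _ hBD, hcard]
    have h2 : (fullConcat n m q F).submatrix f id =
        ((1 : Matrix (Fin q) (Fin q) (ZMod 2)).submatrix f id) * fullConcat n m q F := by
      ext c x
      rw [Matrix.submatrix_apply, Matrix.mul_apply]
      rw [Finset.sum_eq_single_of_mem (f c) (Finset.mem_univ _)]
      · simp [Matrix.one_apply]
      · intro b _ hb
        simp [Matrix.one_apply, hb.symm]
    calc (∑ j, m j) = ((fullConcat n m q F).submatrix f id).rank := by rw [hsub, h1]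
      _ ≤ (fullConcat n m q F).rank := by
          rw [h2]; exact Matrix.rank_mul_le_right _ _
  -- upper bound
  have hup : (fullConcat n m q F).rank ≤ ∑ j, m j := by
    have := (fullConcat n m q F).rank_le_card_width
    rwa [hcard] at this
  omega

end
end

section
/- Under the K-user deterministic design, for every index j ∈ {1, …, r}, the rank over 𝔽₂ of the horizontal concatenation of all r shifted generator matrices S^{q − n₁} G₁, …, S^{q − n_r} G_r minus the rank of the horizontal concatenation of the r − 1 shifted generator matrices with index j omitted equals m_j; i.e., user j of the deterministic multiple access channel achieves exactly m_j bits under treating-interference-as-noise decoding. -/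
noncomputable section

/-- The horizontal concatenation of the `r − 1` shifted generator matrices with
index `j₀` omitted. -/
def concatOmit {r : ℕ} (n m : Fin r → ℕ) (q : ℕ)
    (F : ∀ j : Fin r, Matrix (Fin (m j)) (Fin (m j)) (ZMod 2)) (j₀ : Fin r) :
    Matrix (Fin q) ((j : {x : Fin r // x ≠ j₀}) × Fin (m j.1)) (ZMod 2) :=
  Matrix.of fun i c => (shiftMatrix q ^ (q - n c.1.1) * Gmat n m q F c.1.1) i c.2

lemma shift_pow_apply (q t : ℕ) (i k : Fin q) :
    (shiftMatrix q ^ t) i k = if (i : ℕ) = (k : ℕ) + t then 1 else 0 := by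
  induction t generalizing k with
  | zero =>
    simp [Matrix.one_apply, Fin.ext_iff]
  | succ t ih =>
    rw [pow_succ, Matrix.mul_apply]
    by_cases h : (i : ℕ) = (k : ℕ) + (t + 1)
    · have hk1 : (k : ℕ) + 1 < q := by have := i.isLt; omega
      rw [Finset.sum_eq_single (⟨(k : ℕ) + 1, hk1⟩ : Fin q)]
      · rw [ih]
        simp only [shiftMatrix, Matrix.of_apply]
        have h1 : (i : ℕ) = ((⟨(k : ℕ) + 1, hk1⟩ : Fin q) : ℕ) + t := by simp; omega
        rw [if_pos h1, if_pos (by simp), if_pos h, one_mul]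
      · intro b _ hb
        have hb' : (b : ℕ) ≠ (k : ℕ) + 1 := by
          intro hc; exact hb (Fin.ext (by simpa using hc))
        simp only [shiftMatrix, Matrix.of_apply]
        rw [if_neg hb', mul_zero]
      · simp
    · rw [if_neg h]
      apply Finset.sum_eq_zero
      intro b _
      rw [ih]
      simp only [shiftMatrix, Matrix.of_apply]
      split_ifs with h1 h2 <;> simp <;> omega

lemma shift_pow_mul_apply {q t p : ℕ} (M : Matrix (Fin q) (Fin p) (ZMod 2))
    (i : Fin q) (c : Fin p) :
    (shiftMatrix q ^ t * M) i c =
      if h : t ≤ (i : ℕ) then M ⟨(i : ℕ) - t, by have := i.isLt; omega⟩ c else 0 := by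
  rw [Matrix.mul_apply]
  by_cases h : t ≤ (i : ℕ)
  · have hlt : (i : ℕ) - t < q := by have := i.isLt; omega
    rw [Finset.sum_eq_single (⟨(i : ℕ) - t, hlt⟩ : Fin q)]
    · rw [shift_pow_apply]
      simp only [dif_pos h]
      have : (i : ℕ) = ((⟨(i : ℕ) - t, hlt⟩ : Fin q) : ℕ) + t := by simp; omega
      rw [if_pos this, one_mul]
    · intro b _ hb
      rw [shift_pow_apply]
      have : (i : ℕ) ≠ (b : ℕ) + t := by
        intro hc; exact hb (Fin.ext (by simp; omega))
      rw [if_neg this, zero_mul]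
    · simp
  · rw [dif_neg h]
    apply Finset.sum_eq_zero
    intro b _
    rw [shift_pow_apply, if_neg (by omega), zero_mul]

lemma G_entry {r : ℕ} (n m : Fin r → ℕ) (q : ℕ)
    (F : ∀ j : Fin r, Matrix (Fin (m j)) (Fin (m j)) (ZMod 2)) (j : Fin r)
    (hnq : n j ≤ q) (hmn : ∑ i ∈ Finset.Ici j, m i ≤ n j) (i : Fin q) (c : Fin (m j)) :
    (shiftMatrix q ^ (q - n j) * Gmat n m q F j) i c =
      if h : q - ∑ i ∈ Finset.Ici j, m i ≤ (i : ℕ) ∧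
          (i : ℕ) < q - ∑ i ∈ Finset.Ici j, m i + m j
      then F j ⟨(i : ℕ) - (q - ∑ i ∈ Finset.Ici j, m i), by omega⟩ c else 0 := by
  rw [shift_pow_mul_apply]
  simp only [Gmat, blockAt, Matrix.of_apply]
  by_cases h1 : q - n j ≤ (i : ℕ)
  · rw [dif_pos h1]
    by_cases h2 : q - ∑ i ∈ Finset.Ici j, m i ≤ (i : ℕ) ∧
        (i : ℕ) < q - ∑ i ∈ Finset.Ici j, m i + m j
    · rw [dif_pos (by simp; omega), dif_pos h2]
      congr 1
      exact Fin.ext (by simp; omega)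
    · rw [dif_neg (by simp; omega), dif_neg h2]
  · rw [dif_neg h1, dif_neg (by omega)]

/-- General rank lemma for block-structured matrices with disjoint row intervals. -/
lemma rank_of_blocks {α : Type} [Fintype α] [DecidableEq α] (q : ℕ) (m : α → ℕ)
    (M : Matrix (Fin q) ((j : α) × Fin (m j)) (ZMod 2)) (a : α → ℕ)
    (ha : ∀ j, a j + m j ≤ q)
    (hdisj : ∀ j j' : α, j ≠ j' → ∀ i : ℕ, a j ≤ i → i < a j + m j →
      ¬ (a j' ≤ i ∧ i < a j' + m j'))
    (F : ∀ j, Matrix (Fin (m j)) (Fin (m j)) (ZMod 2)) (hF : ∀ j, IsUnit (F j))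
    (hM : ∀ (i : Fin q) (j : α) (c : Fin (m j)), M i ⟨j, c⟩ =
      if h : a j ≤ (i : ℕ) ∧ (i : ℕ) < a j + m j
      then F j ⟨(i : ℕ) - a j, by omega⟩ c else 0) :
    M.rank = ∑ j, m j := by
  have h0 : ∀ v, M.mulVec v = 0 → v = 0 := by
    intro v hv
    funext p
    obtain ⟨j, c0⟩ := p
    set w : Fin (m j) → ZMod 2 := fun c => v ⟨j, c⟩ with hw
    have hFw : (F j).mulVec w = 0 := by
      funext d
      have hi : a j + (d : ℕ) < q := by have := d.isLt; have := ha j; omega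
      have hrow := congrFun hv ⟨a j + (d : ℕ), hi⟩
      simp only [Pi.zero_apply] at hrow
      rw [Matrix.mulVec, dotProduct, ← Finset.univ_sigma_univ,
        Finset.sum_sigma] at hrow
      rw [Finset.sum_eq_single j] at hrow
      · simp only [Pi.zero_apply]
        rw [Matrix.mulVec, dotProduct]
        rw [← hrow]
        apply Finset.sum_congr rfl
        intro c _
        rw [hM]
        have hcond : a j ≤ a j + (d : ℕ) ∧ a j + (d : ℕ) < a j + m j := by
          have := d.isLt; omega
        rw [dif_pos (by simpa using hcond)]
        congr 1
        exact Fin.ext (by simp)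
      · intro j' _ hne
        apply Finset.sum_eq_zero
        intro c _
        have hd := hdisj j j' (fun hc => hne hc.symm) (a j + (d : ℕ))
          (Nat.le_add_right _ _) (by have := d.isLt; omega)
        rw [hM, dif_neg (by simpa using hd), zero_mul]
      · simp
    have hFinj : Function.Injective (F j).mulVec := by
      intro x y hxy
      have hdet : IsUnit (F j).det := (Matrix.isUnit_iff_isUnit_det _).mp (hF j)
      have := congrArg ((F j)⁻¹).mulVec hxy
      rwa [Matrix.mulVec_mulVec, Matrix.mulVec_mulVec, Matrix.nonsing_inv_mul _ hdet,
        Matrix.one_mulVec, Matrix.one_mulVec] at this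
    have hw0 : w = 0 := by
      apply hFinj; rw [hFw, Matrix.mulVec_zero]
    exact congrFun hw0 c0
  have hinj : Function.Injective M.mulVecLin := by
    rw [← LinearMap.ker_eq_bot, LinearMap.ker_eq_bot']
    intro v hv
    exact h0 v hv
  rw [Matrix.rank, LinearMap.finrank_range_of_inj hinj, Module.finrank_pi,
    Fintype.card_sigma]
  simp

/-- User `j` of the deterministic MAC achieves exactly `m_j` bits under TIN decoding. -/
theorem tin_rate_K_user (r : ℕ) (hr : 1 ≤ r) (n : Fin r → ℕ)
    (hanti : ∀ i j : Fin r, i ≤ j → n j ≤ n i) (q : ℕ) (hq : q = n ⟨0, hr⟩)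
    (m : Fin r → ℕ) (hm : ∀ j : Fin r, (∑ i ∈ Finset.Ici j, m i) ≤ n j)
    (F : ∀ j : Fin r, Matrix (Fin (m j)) (Fin (m j)) (ZMod 2))
    (hF : ∀ j, IsUnit (F j)) (j : Fin r) :
    (fullConcat n m q F).rank - (concatOmit n m q F j).rank = m j := by
  have hnq : ∀ j' : Fin r, n j' ≤ q := by
    intro j'; rw [hq]; exact hanti _ _ (by simp [Fin.le_def])
  set a : Fin r → ℕ := fun j' => q - ∑ i ∈ Finset.Ici j', m i with ha_def
  have hsum : ∀ j' : Fin r, ∑ i ∈ Finset.Ici j', m i = m j' + ∑ i ∈ Finset.Ioi j', m i := by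
    intro j'
    rw [← Finset.Ioi_insert, Finset.sum_insert (by simp)]
  have hmem : ∀ j' : Fin r, m j' ≤ ∑ i ∈ Finset.Ici j', m i := fun j' =>
    Finset.single_le_sum (fun _ _ => Nat.zero_le _) (Finset.mem_Ici.mpr le_rfl)
  have hbound : ∀ j' : Fin r, a j' + m j' ≤ q := by
    intro j'
    have h1 := hmem j'
    have h2 := le_trans (hm j') (hnq j')
    simp only [ha_def]; omega
  have horder : ∀ j1 j2 : Fin r, j1 < j2 → a j1 + m j1 ≤ a j2 := by
    intro j1 j2 h12
    have h1 := hsum j1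
    have h2 : ∑ i ∈ Finset.Ici j2, m i ≤ ∑ i ∈ Finset.Ioi j1, m i :=
      Finset.sum_le_sum_of_subset
        (fun x hx => Finset.mem_Ioi.mpr (lt_of_lt_of_le h12 (Finset.mem_Ici.mp hx)))
    have h3 := le_trans (hm j1) (hnq j1)
    simp only [ha_def]; omega
  have hdisj : ∀ j1 j2 : Fin r, j1 ≠ j2 → ∀ i : ℕ, a j1 ≤ i → i < a j1 + m j1 →
      ¬ (a j2 ≤ i ∧ i < a j2 + m j2) := by
    intro j1 j2 hne i hi1 hi2
    rcases lt_or_gt_of_ne hne with h | h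
    · have := horder j1 j2 h; omega
    · have := horder j2 j1 h; omega
  have hrank1 : (fullConcat n m q F).rank = ∑ i, m i := by
    apply rank_of_blocks q m _ a hbound hdisj F hF
    intro i j' c
    show (shiftMatrix q ^ (q - n j') * Gmat n m q F j') i c = _
    rw [G_entry n m q F j' (hnq j') (hm j')]
  have hrank2 : (concatOmit n m q F j).rank = ∑ x ∈ Finset.univ.erase j, m x := by
    rw [rank_of_blocks q (fun x : {x : Fin r // x ≠ j} => m x.1) (concatOmit n m q F j)
      (fun x => a x.1) (fun x => hbound x.1)
      (fun x x' hne => hdisj x.1 x'.1 (fun h => hne (Subtype.ext h)))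
      (fun x => F x.1) (fun x => hF x.1)
      (by
        intro i x c
        show (shiftMatrix q ^ (q - n x.1) * Gmat n m q F x.1) i c = _
        rw [G_entry n m q F x.1 (hnq x.1) (hm x.1)])]
    exact (Finset.sum_subtype _ (fun x => by simp) (fun x => m x)).symm
  rw [hrank1, hrank2]
  have hsplit := Finset.add_sum_erase Finset.univ m (Finset.mem_univ j)
  omega

end
end

section
/- Let K ≥ 1 and consider users i = 1, …, K with real channel gains h_i ≠ 0 and powers P_i > 0, set SNR_i = h_i² P_i and s_i = log₂ SNR_i. Let n₁ ≥ n₂ ≥ … ≥ n_K be natural numbers with n_i ≤ s_i + 1 for every i, and let t_i ≥ 1 be integers with modulation orders m_i = 2 t_i satisfying Σ_{i=j}^{K} m_i ≤ n_j for every j ∈ {1, …, K}. Define E_j = 2^{n₁ − s_j + Σ_{i=j+1}^{K} m_i} · (2^{m_j} − 1)/6 and η = 1/√(max_{1 ≤ j ≤ K} E_j). Then for any two distinct tuples (x₁, …, x_K) ≠ (x'₁, …, x'_K) with x_i, x'_i ∈ Q(t_i, 1), the superimposed constellation points satisfy |Σ_{i=1}^{K} h_i √(P_i) η 2^{(n₁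 − s_i + Σ_{i'=i+1}^{K} m_{i'})/2} (x_i − x'_i)| ≥ √3; i.e., the minimum distance of the received superimposed constellation is at least √3. -/
noncomputable section

/-!
Writing `h i = ε i * |h i|` with `ε i = ±1` and `2 ^ (s i / 2) = |h i| * √(P i)`, the gain of
user `i` in the superposition is `ε i * w * 2 ^ (t (i+1) + ⋯ + t K)` with the common factor
`w = η * 2 ^ (n₁ / 2)`. The rate condition together with `n j ≤ s j + 1` gives `3 * E j ≤ 2 ^ n₁`
for every user, hence `w ≥ √3`. The difference of two QAM points of order `t i` is a Gaussian
integer with coordinates of absolute value `< 2 ^ t i`, so the superposed difference is `w` times a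
mixed-radix expansion of Gaussian integers, which vanishes only if all digits do; a nonzero
Gaussian integer has norm at least `1`.
-/

open Finset Real

section MixedRadix

variable {ι : Type*} [LinearOrder ι] [Fintype ι] [LocallyFiniteOrderTop ι]

/-- All terms below the highest nonzero digit `d i₀` are multiples of `∏ j ≥ i₀, b j`, which
cannot divide the term `(∏ j > i₀, b j) * d i₀` since `0 < |d i₀| < b i₀`. -/
theorem sum_prod_Ioi_mul_ne_zero (b d : ι → ℤ) (hd : ∀ i, |d i| < b i) (hne : d ≠ 0) :
    ∑ i, (∏ j ∈ Ioi i, b j) * d i ≠ 0 := by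
  set S := univ.filter fun i => d i ≠ 0
  have hS : S.Nonempty := by
    obtain ⟨i, hi⟩ := Function.ne_iff.1 hne
    exact ⟨i, by simpa [S] using hi⟩
  set i₀ := S.max' hS
  have hi₀ : d i₀ ≠ 0 := (mem_filter.1 (S.max'_mem hS)).2
  have hzero : ∀ i, i₀ < i → d i = 0 := fun i hi =>
    by_contra fun h => (S.le_max' i (by simp [S, h])).not_gt hi
  have hdvd : ∀ i ∈ univ.erase i₀, (∏ j ∈ Ici i₀, b j) ∣ (∏ j ∈ Ioi i, b j) * d i := by
    intro i hi
    rcases (ne_of_mem_erase hi).lt_or_gt with hlt | hgt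
    · exact dvd_mul_of_dvd_left (prod_dvd_prod_of_subset _ _ _
        fun k hk => mem_Ioi.2 (hlt.trans_le (mem_Ici.1 hk))) _
    · simp [hzero i hgt]
  intro hsum
  rw [← add_sum_erase _ _ (mem_univ i₀), add_eq_zero_iff_eq_neg] at hsum
  have hdvd₀ : (∏ j ∈ Ici i₀, b j) ∣ (∏ j ∈ Ioi i₀, b j) * d i₀ := by
    rw [hsum, dvd_neg]
    exact dvd_sum hdvd
  have hb : ∀ j, b j ≠ 0 := fun j => ((abs_nonneg _).trans_lt (hd j)).ne'
  rw [← prod_Ioi_mul_eq_prod_Ici, mul_dvd_mul_iff_left (prod_ne_zero_iff.2 fun j _ => hb j)]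
    at hdvd₀
  exact hi₀ (Int.eq_zero_of_abs_lt_dvd hdvd₀ (hd i₀))

theorem one_le_norm_intCast_add_intCast_mul_I {A B : ℤ} (h : A ≠ 0 ∨ B ≠ 0) :
    1 ≤ ‖(A + B * Complex.I : ℂ)‖ := by
  rcases h with h | h
  · calc (1 : ℝ) ≤ |(A : ℝ)| := by exact_mod_cast Int.one_le_abs h
      _ ≤ _ := by simpa using Complex.abs_re_le_norm (A + B * Complex.I)
  · calc (1 : ℝ) ≤ |(B : ℝ)| := by exact_mod_cast Int.one_le_abs h
      _ ≤ _ := by simpa using Complex.abs_im_le_norm (A + B * Complex.I)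

theorem one_le_norm_sum_mul_prod_Ioi_mul (b ε r q : ι → ℤ) (hε : ∀ i, |ε i| = 1)
    (hr : ∀ i, |r i| < b i) (hq : ∀ i, |q i| < b i) (hne : r ≠ 0 ∨ q ≠ 0) :
    1 ≤ ‖∑ i, ((ε i * ∏ j ∈ Ioi i, b j : ℤ) : ℂ) * (r i + q i * Complex.I)‖ := by
  have hz : ∑ i, ((ε i * ∏ j ∈ Ioi i, b j : ℤ) : ℂ) * (r i + q i * Complex.I) =
      ((∑ i, (∏ j ∈ Ioi i, b j) * (ε i * r i) : ℤ) : ℂ)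
      + ((∑ i, (∏ j ∈ Ioi i, b j) * (ε i * q i) : ℤ) : ℂ) * Complex.I := by
    simp only [Int.cast_sum, Int.cast_mul, sum_mul, ← sum_add_distrib]
    exact sum_congr rfl fun i _ => by ring
  have hε0 : ∀ i, ε i ≠ 0 := fun i => abs_ne_zero.1 (by simp [hε i])
  have hsigned : ∀ d : ι → ℤ, d ≠ 0 → (fun i => ε i * d i) ≠ 0 := fun d hd hc =>
    hd (funext fun i => by simpa [hε0 i] using congrFun hc i)
  rw [hz]
  exact one_le_norm_intCast_add_intCast_mul_I <| hne.imp
    (fun h => sum_prod_Ioi_mul_ne_zero b _ (by simpa [abs_mul, hε] using hr) (hsigned r h))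
    (fun h => sum_prod_Ioi_mul_ne_zero b _ (by simpa [abs_mul, hε] using hq) (hsigned q h))

end MixedRadix

theorem exists_sub_eq_of_mem_QAM {t : ℕ} {δ : ℝ} {z z' : ℂ} (hz : z ∈ QAM t δ)
    (hz' : z' ∈ QAM t δ) :
    ∃ r q : ℤ, |r| < 2 ^ t ∧ |q| < 2 ^ t ∧ z - z' = δ * (r + q * Complex.I) := by
  obtain ⟨a, ha, b, hb, rfl⟩ := hz
  obtain ⟨a', ha', b', hb', rfl⟩ := hz'
  refine ⟨a - a', b - b', ?_, ?_, by push_cast; ring⟩ <;>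
    exact abs_sub_lt_of_nonneg_of_lt (by positivity) (by exact_mod_cast ‹_›) (by positivity)
      (by exact_mod_cast ‹_›)

theorem exists_int_abs_eq_one_mul_abs {α : Type*} [Ring α] [LinearOrder α] [IsOrderedRing α]
    (x : α) : ∃ ε : ℤ, |ε| = 1 ∧ ε * |x| = x := by
  rcases abs_choice x with h | h
  · exact ⟨1, by simp, by simp [h]⟩
  · exact ⟨-1, by simp, by simp [h]⟩

theorem mul_sqrt_mul_rpow_sub_logb_div_two {h P η N : ℝ} {T : ℕ} {ε : ℤ} (hh : h ≠ 0)
    (hP : 0 < P) (hε : ε * |h| = h) :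
    h * √P * η * 2 ^ ((N - logb 2 (h ^ 2 * P) + 2 * T) / 2) = η * 2 ^ (N / 2) * 2 ^ T * ε := by
  set s := logb 2 (h ^ 2 * P)
  have hsqrt : h * √P = ε * 2 ^ (s / 2) := by
    rw [div_eq_mul_one_div, rpow_mul zero_le_two, rpow_logb zero_lt_two one_lt_two.ne'
      (by positivity), ← sqrt_eq_rpow, sqrt_mul (sq_nonneg h), sqrt_sq_eq_abs, ← mul_assoc, hε]
  calc h * √P * η * 2 ^ ((N - s + 2 * T) / 2)
      = ε * η * 2 ^ (s / 2 + (N - s + 2 * T) / 2) := by rw [hsqrt, rpow_add zero_lt_two]; ring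
    _ = ε * η * 2 ^ (N / 2 + T) := by ring_nf
    _ = η * 2 ^ (N / 2) * 2 ^ T * ε := by rw [rpow_add zero_lt_two, rpow_natCast]; ring

theorem sqrt_le_one_div_sqrt_sup'_mul_sqrt {ι : Type*} {s : Finset ι} (hs : s.Nonempty)
    {E : ι → ℝ} {c A : ℝ} (hpos : ∀ j ∈ s, 0 < E j) (hle : ∀ j ∈ s, c * E j ≤ A) :
    √c ≤ 1 / √(s.sup' hs E) * √A := by
  obtain ⟨j, hj, hsup⟩ := exists_mem_eq_sup' hs E
  rw [hsup, one_div_mul_eq_div, le_div_iff₀ (sqrt_pos.2 (hpos j hj)), ← sqrt_mul' _ (hpos j hj).le]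
  exact sqrt_le_sqrt (hle j hj)

theorem three_mul_rpow_mul_two_pow_sub_one_div_six_le {e N : ℝ} {m : ℕ} (h : e + m ≤ N + 1) :
    3 * ((2 : ℝ) ^ e * (2 ^ m - 1) / 6) ≤ 2 ^ N := by
  calc 3 * ((2 : ℝ) ^ e * (2 ^ m - 1) / 6) ≤ (2 : ℝ) ^ (e + m) / 2 := by
        rw [rpow_add zero_lt_two, rpow_natCast]
        nlinarith [rpow_pos_of_pos zero_lt_two e]
    _ ≤ 2 ^ (N + 1) / 2 := by gcongr; norm_num
    _ = 2 ^ N := by rw [rpow_add_one two_ne_zero]; ring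

theorem superimposed_min_distance_general (K : ℕ) (hK : 1 ≤ K)
    (h P : Fin K → ℝ) (hh : ∀ i, h i ≠ 0) (hP : ∀ i, 0 < P i)
    (s : Fin K → ℝ) (hs : ∀ i, s i = Real.logb 2 ((h i) ^ 2 * P i))
    (n : Fin K → ℕ)
    (hn : ∀ i, (n i : ℝ) ≤ s i + 1)
    (t : Fin K → ℕ) (ht : ∀ i, 1 ≤ t i)
    (m : Fin K → ℕ) (hm : ∀ i, m i = 2 * t i)
    (hrate : ∀ j : Fin K, (∑ i ∈ Finset.Ici j, m i) ≤ n j)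
    (E : Fin K → ℝ)
    (hE : ∀ j, E j = (2 : ℝ) ^ (((n ⟨0, hK⟩ : ℕ) : ℝ) - s j
        + ((∑ i ∈ Finset.Ioi j, m i : ℕ) : ℝ)) * ((2 : ℝ) ^ m j - 1) / 6)
    (η : ℝ)
    (hη : η = 1 / Real.sqrt (Finset.univ.sup' ⟨⟨0, hK⟩, Finset.mem_univ _⟩ E))
    (x x' : Fin K → ℂ)
    (hx : ∀ i, x i ∈ QAM (t i) 1) (hx' : ∀ i, x' i ∈ QAM (t i) 1)
    (hne : x ≠ x') :
    Real.sqrt 3 ≤ ‖(∑ i, ((h i * Real.sqrt (P i) * η *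
        (2 : ℝ) ^ ((((n ⟨0, hK⟩ : ℕ) : ℝ) - s i
          + ((∑ i' ∈ Finset.Ioi i, m i' : ℕ) : ℝ)) / 2) : ℝ) : ℂ)
      * (x i - x' i))‖ := by
  set N : ℝ := ((n ⟨0, hK⟩ : ℕ) : ℝ)
  have hEpos : ∀ j ∈ univ, 0 < E j := fun j _ => by
    have hm_pos : (1 : ℝ) < 2 ^ m j := one_lt_pow₀ one_lt_two (by grind)
    rw [hE j]
    exact div_pos (mul_pos (by positivity) (sub_pos.2 hm_pos)) (by norm_num)
  have hEle : ∀ j ∈ univ, 3 * E j ≤ 2 ^ N := fun j _ => by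
    have hrate_j : ((∑ i ∈ Ioi j, m i : ℕ) : ℝ) + m j ≤ n j := by
      exact_mod_cast (add_comm _ _).trans_le ((add_sum_Ioi_eq_sum_Ici (f := m) j).trans_le (hrate j))
    rw [hE j]
    exact three_mul_rpow_mul_two_pow_sub_one_div_six_le (by linarith [hn j])
  have hw : √3 ≤ η * 2 ^ (N / 2) := by
    have hsqrt : √(2 ^ N) = (2 : ℝ) ^ (N / 2) := by
      rw [sqrt_eq_rpow, ← rpow_mul zero_le_two]; ring_nf
    rw [hη, ← hsqrt]
    exact sqrt_le_one_div_sqrt_sup'_mul_sqrt _ hEpos hEle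
  choose ε hε_abs hε using fun i => exists_int_abs_eq_one_mul_abs (h i)
  choose r q hr hq hrq using fun i => exists_sub_eq_of_mem_QAM (hx i) (hx' i)
  have hsum : ∑ i, ((h i * √(P i) * η * (2 : ℝ) ^ ((N - s i
      + ((∑ i' ∈ Ioi i, m i' : ℕ) : ℝ)) / 2) : ℝ) : ℂ) * (x i - x' i)
      = ((η * 2 ^ (N / 2) : ℝ) : ℂ) *
        ∑ i, ((ε i * ∏ j ∈ Ioi i, 2 ^ t j : ℤ) : ℂ) * (r i + q i * Complex.I) := by
    rw [mul_sum]
    refine sum_congr rfl fun i _ => ?_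
    have hmt : ((∑ i' ∈ Ioi i, m i' : ℕ) : ℝ) = 2 * ((∑ i' ∈ Ioi i, t i' : ℕ) : ℝ) := by
      simp [hm, mul_sum]
    rw [hs i, hmt, mul_sqrt_mul_rpow_sub_logb_div_two (hh i) (hP i) (hε i), hrq i,
      prod_pow_eq_pow_sum]
    push_cast
    ring
  have hdigits : r ≠ 0 ∨ q ≠ 0 := by
    by_contra! h0
    exact hne (funext fun i => sub_eq_zero.1 (by simp [hrq i, h0.1, h0.2]))
  have hdist := one_le_norm_sum_mul_prod_Ioi_mul (fun i => 2 ^ t i) ε r q hε_abs hr hq hdigits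
  rw [hsum, norm_mul, Complex.norm_real, norm_of_nonneg ((sqrt_nonneg 3).trans hw)]
  exact hw.trans (le_mul_of_one_le_right ((sqrt_nonneg 3).trans hw) hdist)

/-- The minimum distance of the received superimposed constellation of the proposed
coded-modulation scheme is at least `√3`. -/
theorem superimposed_min_distance (K : ℕ) (hK : 1 ≤ K)
    (h P : Fin K → ℝ) (hh : ∀ i, h i ≠ 0) (hP : ∀ i, 0 < P i)
    (s : Fin K → ℝ) (hs : ∀ i, s i = Real.logb 2 ((h i) ^ 2 * P i))
    (n : Fin K → ℕ) (hanti : ∀ i j : Fin K, i ≤ j → n j ≤ n i)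
    (hn : ∀ i, (n i : ℝ) ≤ s i + 1)
    (t : Fin K → ℕ) (ht : ∀ i, 1 ≤ t i)
    (m : Fin K → ℕ) (hm : ∀ i, m i = 2 * t i)
    (hrate : ∀ j : Fin K, (∑ i ∈ Finset.Ici j, m i) ≤ n j)
    (E : Fin K → ℝ)
    (hE : ∀ j, E j = (2 : ℝ) ^ (((n ⟨0, hK⟩ : ℕ) : ℝ) - s j
        + ((∑ i ∈ Finset.Ioi j, m i : ℕ) : ℝ)) * ((2 : ℝ) ^ m j - 1) / 6)
    (η : ℝ)
    (hη : η = 1 / Real.sqrt (Finset.univ.sup' ⟨⟨0, hK⟩, Finset.mem_univ _⟩ E))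
    (x x' : Fin K → ℂ)
    (hx : ∀ i, x i ∈ QAM (t i) 1) (hx' : ∀ i, x' i ∈ QAM (t i) 1)
    (hne : x ≠ x') :
    Real.sqrt 3 ≤ ‖(∑ i, ((h i * Real.sqrt (P i) * η *
        (2 : ℝ) ^ ((((n ⟨0, hK⟩ : ℕ) : ℝ) - s i
          + ((∑ i' ∈ Finset.Ioi i, m i' : ℕ) : ℝ)) / 2) : ℝ) : ℂ)
      * (x i - x' i))‖ :=
  superimposed_min_distance_general K hK h P hh hP s hs n hn t ht m hm hrate E hE η hη x x' hx hx'
    hne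
end
end

section
/- Let a, s_k, s_{k'} be real numbers and let m, m', A, B be natural numbers with m ≥ 1 and m' ≥ 1. Suppose s_k ≤ m + A and s_{k'} ≥ m' + B − 1. Then (2^{a − s_k + A} · (2^m − 1)) / (2^{a − s_{k'} + B} · (2^{m'} − 1)) ≥ 1/4. (This is the bound ζ_{k,ℓ} ≥ 1/4 on the ratio between user k's actual average transmit power and its power budget, with a = n_ℓ, s_k = log₂ SNR_k, m = m_{k,ℓ}, A = Σ_{i=k+1}^{K} m_{i,ℓ} and n_k = m + A, and s_{k'}, m', B, n_{k'} = m' + B the corresponding quantities of the maximizing user k'; hence the proposed scheme's average power saving is at most 75%.) -/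
/-- The bound `ζ_{k,ℓ} ≥ 1/4` on the ratio between user `k`'s actual average
transmit power and its power budget: with `a = n_ℓ`, `s_k = log₂ SNR_k`,
`m = m_{k,ℓ}`, `A = Σ_{i>k} m_{i,ℓ}` (so `n_k = m + A`), and `s_{k'}, m', B` the
corresponding quantities of the maximizing user `k'`, if `s_k ≤ m + A` and
`s_{k'} ≥ m' + B − 1` then the power ratio is at least `1/4`. -/
theorem power_ratio_bound (a sk sk' : ℝ) (m m' A B : ℕ)
    (hm : 1 ≤ m) (hm' : 1 ≤ m')
    (hsk : sk ≤ ((m : ℝ) + (A : ℝ)))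
    (hsk' : ((m' : ℝ) + (B : ℝ) - 1) ≤ sk') :
    ((2 : ℝ) ^ (a - sk + (A : ℝ)) * ((2 : ℝ) ^ m - 1)) /
      ((2 : ℝ) ^ (a - sk' + (B : ℝ)) * ((2 : ℝ) ^ m' - 1)) ≥ 1 / 4 := by
  have h2 : (0:ℝ) < 2 := two_pos
  have hpm : (2:ℝ) ≤ (2:ℝ)^m := by
    calc (2:ℝ) = 2^1 := (pow_one 2).symm
    _ ≤ 2^m := pow_le_pow_right₀ one_le_two hm
  have hpm' : (2:ℝ) ≤ (2:ℝ)^m' := by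
    calc (2:ℝ) = 2^1 := (pow_one 2).symm
    _ ≤ 2^m' := pow_le_pow_right₀ one_le_two hm'
  have hDpos : 0 < (2 : ℝ) ^ (a - sk' + (B : ℝ)) * ((2 : ℝ) ^ m' - 1) :=
    mul_pos (Real.rpow_pos_of_pos h2 _) (by linarith)
  rw [ge_iff_le, le_div_iff₀ hDpos]
  have e1 : (2:ℝ)^(a - (m:ℝ)) ≤ (2:ℝ)^(a - sk + (A:ℝ)) :=
    (Real.rpow_le_rpow_left_iff one_lt_two).mpr (by linarith)
  have e2 : (2:ℝ)^(a - sk' + (B:ℝ)) ≤ (2:ℝ)^(a - (m':ℝ) + 1) :=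
    (Real.rpow_le_rpow_left_iff one_lt_two).mpr (by linarith)
  have hnum : (2:ℝ)^(a-(m:ℝ)) * ((2:ℝ)^m / 2) ≤
      (2:ℝ)^(a - sk + (A:ℝ)) * ((2:ℝ)^m - 1) :=
    mul_le_mul e1 (by linarith) (by linarith)
      (le_of_lt (Real.rpow_pos_of_pos h2 _))
  have hden : (2 : ℝ) ^ (a - sk' + (B : ℝ)) * ((2 : ℝ) ^ m' - 1) ≤
      (2:ℝ)^(a - (m':ℝ) + 1) * (2:ℝ)^m' :=
    mul_le_mul e2 (by linarith) (by linarith)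
      (le_of_lt (Real.rpow_pos_of_pos h2 _))
  have id1 : (2:ℝ)^(a-(m:ℝ)) * ((2:ℝ)^m / 2) = (2:ℝ)^a / 2 := by
    rw [← Real.rpow_natCast 2 m, mul_div_assoc', ← Real.rpow_add h2]
    norm_num
  have id2 : (2:ℝ)^(a - (m':ℝ) + 1) * (2:ℝ)^m' = (2:ℝ)^a * 2 := by
    rw [← Real.rpow_natCast 2 m', ← Real.rpow_add h2,
      show a-(m':ℝ)+1+(m':ℝ) = a+1 by ring, Real.rpow_add h2, Real.rpow_one]
  rw [id1] at hnum
  rw [id2] at hden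
  have hPpos : (0:ℝ) < (2:ℝ)^a := Real.rpow_pos_of_pos h2 _
  linarith
end
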